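/- arXiv:2006.09233 — 6 statements merged into one kernel-verified Lean document; each statement's English description precedes it below -/
import Mathlib

section
/- Differential induction for non-strict inequalities (Theorem 1, rule (5), case ≤): Let E be a real normed vector space, F : E → E a vector field, B : E → Prop an evolution domain, and e, f : E → ℝ functions that are Fréchet differentiable at every point of E. Assume that for every y ∈ E with B y, the Lie derivatives satisfy (fderiv ℝ e y) (F y) ≤ (fderiv ℝ f y) (F y). Let T ≥ 0 and let x : ℝ → E satisfy, for every t ∈ [0,T], HasDerivAt x (F (x t)) t and B (x t). If e (x 0) ≤ f (x 0), then e (x T) ≤ f (x T). -/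
/-- Differential induction for non-strict inequalities (dL rule, case ≤). -/
theorem dInduct_le {E : Type*} [NormedAddCommGroup E] [NormedSpace ℝ E]
    (F : E → E) (B : E → Prop) (e f : E → ℝ)
    (he : ∀ y : E, DifferentiableAt ℝ e y) (hf : ∀ y : E, DifferentiableAt ℝ f y)
    (hlie : ∀ y : E, B y → (fderiv ℝ e y) (F y) ≤ (fderiv ℝ f y) (F y))
    (T : ℝ) (hT : 0 ≤ T) (x : ℝ → E)
    (hsol : ∀ t ∈ Set.Icc (0 : ℝ) T, HasDerivAt x (F (x t)) t ∧ B (x t))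
    (h0 : e (x 0) ≤ f (x 0)) :
    e (x T) ≤ f (x T) := by
  set g : ℝ → ℝ := fun t => f (x t) - e (x t) with hg
  have hderiv : ∀ t ∈ Set.Icc (0 : ℝ) T,
      HasDerivAt g ((fderiv ℝ f (x t)) (F (x t)) - (fderiv ℝ e (x t)) (F (x t))) t := by
    intro t ht
    have hx := (hsol t ht).1
    exact ((hf (x t)).hasFDerivAt.comp_hasDerivAt t hx).sub
      ((he (x t)).hasFDerivAt.comp_hasDerivAt t hx)
  have hmono : MonotoneOn g (Set.Icc (0 : ℝ) T) := by
    apply monotoneOn_of_hasDerivWithinAt_nonneg (f' := fun t =>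
        (fderiv ℝ f (x t)) (F (x t)) - (fderiv ℝ e (x t)) (F (x t))) (convex_Icc 0 T)
    · exact fun t ht => (hderiv t ht).continuousAt.continuousWithinAt
    · intro t ht
      exact (hderiv t (interior_subset ht)).hasDerivWithinAt
    · intro t ht
      have := hlie (x t) (hsol t (interior_subset ht)).2
      linarith
  have : g 0 ≤ g T := hmono (Set.left_mem_Icc.mpr hT) (Set.right_mem_Icc.mpr hT) hT
  simp only [hg] at this
  linarith
end

section
/- Differential induction for equalities (Theorem 1, rule (5), case =): Let E be a real normed vector space, F : E → E a vector field, B : E → Prop an evolution domain, and e, f : E → ℝ functions that are Fréchet differentiable at every point of E. Assume that for every y ∈ E with B y, the Lie derivatives are equal: (fderiv ℝ e y) (F y) = (fderiv ℝ f y) (F y). Let T ≥ 0 and let x : ℝ → E satisfy, for every t ∈ [0,T], HasDerivAt x (F (x t)) t and B (x t). If e (x 0) = f (x 0), then e (x T) = f (x T). -/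
/-- Differential induction for equalities (dL rule, case =). -/
theorem dInduct_eq {E : Type*} [NormedAddCommGroup E] [NormedSpace ℝ E]
    (F : E → E) (B : E → Prop) (e f : E → ℝ)
    (he : ∀ y : E, DifferentiableAt ℝ e y) (hf : ∀ y : E, DifferentiableAt ℝ f y)
    (hlie : ∀ y : E, B y → (fderiv ℝ e y) (F y) = (fderiv ℝ f y) (F y))
    (T : ℝ) (hT : 0 ≤ T) (x : ℝ → E)
    (hsol : ∀ t ∈ Set.Icc (0 : ℝ) T, HasDerivAt x (F (x t)) t ∧ B (x t))
    (h0 : e (x 0) = f (x 0)) :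
    e (x T) = f (x T) := by
  set g : ℝ → ℝ := fun t => e (x t) - f (x t) with hg
  have hderiv : ∀ t ∈ Set.Icc (0 : ℝ) T, HasDerivAt g 0 t := by
    intro t ht
    obtain ⟨hx, hB⟩ := hsol t ht
    have he' : HasDerivAt (fun s => e (x s)) ((fderiv ℝ e (x t)) (F (x t))) t :=
      (he (x t)).hasFDerivAt.comp_hasDerivAt t hx
    have hf' : HasDerivAt (fun s => f (x s)) ((fderiv ℝ f (x t)) (F (x t))) t :=
      (hf (x t)).hasFDerivAt.comp_hasDerivAt t hx
    have := he'.sub hf'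
    rwa [hlie (x t) hB, sub_self] at this
  have key : g T = g 0 := by
    apply constant_of_has_deriv_right_zero
    · intro s hs
      exact (hderiv s hs).continuousAt.continuousWithinAt
    · intro s hs
      exact ((hderiv s (Set.mem_Icc_of_Ico hs)).hasDerivWithinAt)
    · exact Set.right_mem_Icc.mpr hT
  have h0' : g 0 = 0 := by simp [hg, h0]
  have : g T = 0 := key.trans h0'
  simpa [hg, sub_eq_zero] using this
end

section
/- Differential induction for strict inequalities (Theorem 1, rule (5), case <): Let E be a real normed vector space, F : E → E a vector field, B : E → Prop an evolution domain, and e, f : E → ℝ functions that are Fréchet differentiable at every point of E. Assume that for every y ∈ E with B y, the Lie derivatives satisfy (fderiv ℝ e y) (F y) ≤ (fderiv ℝ f y) (F y). Let T ≥ 0 and let x : ℝ → E satisfy, for every t ∈ [0,T], HasDerivAt x (F (x t)) t and B (x t). If e (x 0) < f (x 0), then e (x T) < f (x T). -/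
/-- Differential induction for strict inequalities (dL rule, case <). -/
theorem dInduct_lt {E : Type*} [NormedAddCommGroup E] [NormedSpace ℝ E]
    (F : E → E) (B : E → Prop) (e f : E → ℝ)
    (he : ∀ y : E, DifferentiableAt ℝ e y) (hf : ∀ y : E, DifferentiableAt ℝ f y)
    (hlie : ∀ y : E, B y → (fderiv ℝ e y) (F y) ≤ (fderiv ℝ f y) (F y))
    (T : ℝ) (hT : 0 ≤ T) (x : ℝ → E)
    (hsol : ∀ t ∈ Set.Icc (0 : ℝ) T, HasDerivAt x (F (x t)) t ∧ B (x t))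
    (h0 : e (x 0) < f (x 0)) :
    e (x T) < f (x T) := by
  set g : ℝ → ℝ := fun t => f (x t) - e (x t) with hg
  have hderiv : ∀ t ∈ Set.Icc (0 : ℝ) T,
      HasDerivAt g ((fderiv ℝ f (x t)) (F (x t)) - (fderiv ℝ e (x t)) (F (x t))) t := by
    intro t ht
    have hx := (hsol t ht).1
    have h1 : HasDerivAt (fun t => f (x t)) ((fderiv ℝ f (x t)) (F (x t))) t :=
      ((hf (x t)).hasFDerivAt.comp_hasDerivAt t hx)
    have h2 : HasDerivAt (fun t => e (x t)) ((fderiv ℝ e (x t)) (F (x t))) t :=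
      ((he (x t)).hasFDerivAt.comp_hasDerivAt t hx)
    exact h1.sub h2
  have hmono : MonotoneOn g (Set.Icc 0 T) := by
    apply monotoneOn_of_hasDerivWithinAt_nonneg (convex_Icc 0 T)
      (f' := fun t => (fderiv ℝ f (x t)) (F (x t)) - (fderiv ℝ e (x t)) (F (x t)))
    · intro t ht
      exact (hderiv t ht).continuousAt.continuousWithinAt
    · intro t ht
      exact (hderiv t (interior_subset ht)).hasDerivWithinAt
    · intro t ht
      have := hlie (x t) (hsol t (interior_subset ht)).2
      linarith
  have h0T : (0 : ℝ) ∈ Set.Icc (0 : ℝ) T := ⟨le_refl 0, hT⟩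
  have hTT : T ∈ Set.Icc (0 : ℝ) T := ⟨hT, le_refl T⟩
  have := hmono h0T hTT hT
  simp only [hg] at this
  linarith
end

section
/- Differential cut (Theorem 1, rule (6), semantic version): Let E be a real normed vector space, F : E → E a vector field, and B, P, Q : E → Prop. Assume: (i) for every T ≥ 0 and every x : ℝ → E which is a solution of ẋ = F(x) within evolution domain B on [0,T], if P (x 0) then P (x t) for all t ∈ [0,T]; and (ii) for every T ≥ 0 and every x : ℝ → E which is a solution of ẋ = F(x) within the evolution domain λ y, B y ∧ P y on [0,T], if Q (x 0) then Q (x t) for all t ∈ [0,T]. Then for every T ≥ 0 and every solution x of ẋ = F(x) within evolution domain B on [0,T] with P (x 0) and Q (x 0), we have Q (x t) for all t ∈ [0,T]. -/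
/-- A solution of ẋ = F(x) within evolution domain B on [0,T]. -/
def IsSolution {E : Type*} [NormedAddCommGroup E] [NormedSpace ℝ E]
    (F : E → E) (B : E → Prop) (T : ℝ) (x : ℝ → E) : Prop :=
  ∀ t ∈ Set.Icc (0 : ℝ) T, HasDerivAt x (F (x t)) t ∧ B (x t)

/-- Differential cut (semantic version). -/
theorem dCut {E : Type*} [NormedAddCommGroup E] [NormedSpace ℝ E]
    (F : E → E) (B P Q : E → Prop)
    (hP : ∀ T ≥ (0 : ℝ), ∀ x : ℝ → E, IsSolution F B T x →
      P (x 0) → ∀ t ∈ Set.Icc (0 : ℝ) T, P (x t))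
    (hQ : ∀ T ≥ (0 : ℝ), ∀ x : ℝ → E, IsSolution F (fun y => B y ∧ P y) T x →
      Q (x 0) → ∀ t ∈ Set.Icc (0 : ℝ) T, Q (x t)) :
    ∀ T ≥ (0 : ℝ), ∀ x : ℝ → E, IsSolution F B T x →
      P (x 0) → Q (x 0) → ∀ t ∈ Set.Icc (0 : ℝ) T, Q (x t) := by
  intro T hT x hsol hP0 hQ0 t ht
  exact hQ T hT x (fun s hs => ⟨(hsol s hs).1, (hsol s hs).2, hP T hT x hsol hP0 s hs⟩) hQ0 t ht
end

section
/- Collinearity of velocity and acceleration is a differential invariant of the AMV dynamics (Theorem 3, ODE form): Let E be a real inner product space, let a ∈ E be a constant acceleration vector, and let v : ℝ → E satisfy HasDerivAt v a t for every t ∈ ℝ. If ⟪a, v 0⟫ = ‖a‖ * ‖v 0‖, then for every t ≥ 0, ⟪a, v t⟫ = ‖a‖ * ‖v t‖. -/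
open RealInnerProductSpace

/-- Collinearity of velocity and acceleration is a differential invariant
of the AMV dynamics (ODE form). -/
theorem collinear_vector_accel_ode {E : Type*} [NormedAddCommGroup E]
    [InnerProductSpace ℝ E]
    (a : E) (v : ℝ → E) (hv : ∀ t : ℝ, HasDerivAt v a t)
    (h0 : ⟪a, v 0⟫ = ‖a‖ * ‖v 0‖) :
    ∀ t ≥ (0 : ℝ), ⟪a, v t⟫ = ‖a‖ * ‖v t‖ := by
  -- First show v t = v 0 + t • a.
  have key : ∀ t : ℝ, v t = v 0 + t • a := by
    have hg : ∀ t : ℝ, HasDerivAt (fun t => v t - t • a) 0 t := by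
      intro t
      have h1 : HasDerivAt (fun t : ℝ => t • a) a t := by
        simpa using (hasDerivAt_id t).smul_const a
      have h2 := (hv t).sub h1
      rw [sub_self] at h2
      exact h2
    intro t
    have hconst := is_const_of_deriv_eq_zero (f := fun t => v t - t • a)
      (fun x => (hg x).differentiableAt) (fun x => (hg x).deriv) t 0
    simp only [zero_smul, sub_zero] at hconst
    rw [sub_eq_iff_eq_add] at hconst
    exact hconst
  by_cases ha : a = 0
  · intro t _
    simp [ha]
  · -- equality case of Cauchy-Schwarz: v 0 = c • a with c ≥ 0
    have hna : (0 : ℝ) < ‖a‖ := norm_pos_iff.mpr ha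
    have h0' : ‖v 0‖ • a = ‖a‖ • v 0 := (inner_eq_norm_mul_iff_real).mp h0
    set c : ℝ := ‖v 0‖ / ‖a‖ with hc
    have hc0 : 0 ≤ c := div_nonneg (norm_nonneg _) hna.le
    have hv0 : v 0 = c • a := by
      have := congrArg (fun x => (‖a‖)⁻¹ • x) h0'
      simp only [smul_smul] at this
      rw [inv_mul_cancel₀ hna.ne', one_smul] at this
      rw [← this, hc, div_eq_inv_mul, mul_comm, mul_smul]
    intro t ht
    have hvt : v t = (c + t) • a := by rw [key t, hv0, add_smul]
    have hct : 0 ≤ c + t := by linarith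
    rw [hvt, real_inner_smul_right, real_inner_self_eq_norm_mul_norm,
      norm_smul, Real.norm_eq_abs, abs_of_nonneg hct]
    ring
end

section
/- Constant heading under straight-line travel (corollary proved in Figure 7): Let E be a real inner product space, a ∈ E a constant acceleration, v : ℝ → E with HasDerivAt v a t for all t ∈ ℝ and v t ≠ 0 for all t ≥ 0, and φ : ℝ → ℝ with HasDerivAt φ (Real.arccos (⟪v t + a, v t⟫ / (‖v t + a‖ * ‖v t‖))) t for all t ≥ 0. If ⟪a, v 0⟫ = ‖a‖ * ‖v 0‖, then φ t = φ 0 for all t ≥ 0. -/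
open RealInnerProductSpace

/-- Constant heading under straight-line travel (corollary of Figure 7). -/
theorem heading_constant {E : Type*} [NormedAddCommGroup E]
    [InnerProductSpace ℝ E]
    (a : E) (v : ℝ → E) (φ : ℝ → ℝ)
    (hv : ∀ t : ℝ, HasDerivAt v a t)
    (hvne : ∀ t ≥ (0 : ℝ), v t ≠ 0)
    (hφ : ∀ t ≥ (0 : ℝ),
      HasDerivAt φ (Real.arccos (⟪v t + a, v t⟫ / (‖v t + a‖ * ‖v t‖))) t)
    (hcol : ⟪a, v 0⟫ = ‖a‖ * ‖v 0‖) :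
    ∀ t ≥ (0 : ℝ), φ t = φ 0 := by
  have hv0 : v 0 ≠ 0 := hvne 0 le_rfl
  have hn0 : ‖v 0‖ ≠ 0 := norm_ne_zero_iff.mpr hv0
  have hnpos : (0 : ℝ) < ‖v 0‖ := norm_pos_iff.mpr hv0
  have hkey : ‖v 0‖ • a = ‖a‖ • v 0 := inner_eq_norm_mul_iff_real.mp hcol
  set c : ℝ := ‖a‖ / ‖v 0‖ with hc
  have hc0 : 0 ≤ c := div_nonneg (norm_nonneg _) (norm_nonneg _)
  have ha : a = c • v 0 := by
    have := congrArg (fun x : E => (‖v 0‖)⁻¹ • x) hkey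
    simp only [smul_smul, inv_mul_cancel₀ hn0, one_smul] at this
    rw [this, hc, div_eq_inv_mul, mul_smul]
  -- v t = v 0 + t • a
  have hvf : ∀ t : ℝ, v t = v 0 + t • a := by
    intro t
    have hg : ∀ s : ℝ, HasDerivAt (fun s : ℝ => v s - s • a) 0 s := by
      intro s
      have h := (hv s).sub ((hasDerivAt_id' s).smul_const a)
      rwa [one_smul, sub_self] at h
    have hdiff : Differentiable ℝ (fun s : ℝ => v s - s • a) :=
      fun s => (hg s).differentiableAt
    have hconst : (fun s : ℝ => v s - s • a) t = (fun s : ℝ => v s - s • a) 0 :=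
      is_const_of_deriv_eq_zero hdiff (fun s => (hg s).deriv) t 0
    simp only [zero_smul, sub_zero] at hconst
    have h2 : v t - t • a = v 0 := hconst
    have := congrArg (fun x : E => x + t • a) h2
    simpa [sub_add_cancel] using this
  -- the derivative of φ vanishes on [0, ∞)
  have hzero : ∀ t ≥ (0 : ℝ),
      Real.arccos (⟪v t + a, v t⟫ / (‖v t + a‖ * ‖v t‖)) = 0 := by
    intro t ht
    have hvt : v t = (1 + t * c) • v 0 := by
      rw [hvf t, ha, smul_smul, add_smul, one_smul]
    have hvta : v t + a = (1 + (t + 1) * c) • v 0 := by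
      rw [hvt, ha, ← add_smul]; ring_nf
    have hα : (0 : ℝ) < 1 + t * c := by nlinarith
    have hβ : (0 : ℝ) < 1 + (t + 1) * c := by nlinarith
    have hinner : ⟪v t + a, v t⟫ = (1 + (t + 1) * c) * (1 + t * c) * (‖v 0‖ * ‖v 0‖) := by
      rw [hvta, hvt, real_inner_smul_left, real_inner_smul_right,
        real_inner_self_eq_norm_mul_norm]
      ring
    have hnorms : ‖v t + a‖ * ‖v t‖ = (1 + (t + 1) * c) * (1 + t * c) * (‖v 0‖ * ‖v 0‖) := by
      rw [hvta, hvt, norm_smul, norm_smul, Real.norm_eq_abs, Real.norm_eq_abs,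
        abs_of_pos hα, abs_of_pos hβ]
      ring
    have hne : (1 + (t + 1) * c) * (1 + t * c) * (‖v 0‖ * ‖v 0‖) ≠ 0 := by positivity
    rw [hinner, hnorms, div_self hne, Real.arccos_one]
  -- conclude φ constant on [0, ∞)
  intro t ht
  have hcont : ContinuousOn φ (Set.Icc 0 t) := fun s hs =>
    ((hφ s hs.1).continuousAt).continuousWithinAt
  have hderiv : ∀ s ∈ Set.Ico (0 : ℝ) t, HasDerivWithinAt φ 0 (Set.Ici s) s := by
    intro s hs
    have := (hφ s hs.1).hasDerivWithinAt (s := Set.Ici s)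
    rwa [hzero s hs.1] at this
  exact constant_of_has_deriv_right_zero hcont hderiv t (Set.mem_Icc.mpr ⟨ht, le_rfl⟩)
end
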